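/- Let m, n be positive integers with m ≤ n and set d = ⌊n/m⌋. For any group G, the wreath product (G ≀ Sym(Fin d)) ≀ Sym(Fin m) embeds into G ≀ Sym(Fin (m·d)), and hence Mat_m((G ≀ Sym(Fin d))⁰) has unit group embedding into the unit group of Matₙ(G⁰). -/

import Mathlib

/-- A generalized rook matrix of order `n` over the group with zero `G⁰`:
an `n × n` matrix over `G ∪ {0}` with at most one nonzero entry in each row
and each column.  We record, for each column `j`, the (optional) pair
`(entry, row)` of its unique nonzero entry; the field `inj` states that
distinct columns use distinct rows. -/
structure Rook (n : ℕ) (G : Type*) [Group G] : Type _ where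
  col : Fin n → Option (G × Fin n)
  inj : ∀ ⦃j k : Fin n⦄ ⦃p q : G × Fin n⦄,
      col j = some p → col k = some q → p.2 = q.2 → j = k

namespace Rook

variable {n : ℕ} {G : Type*} [Group G]

theorem ext' {x y : Rook n G} (h : x.col = y.col) : x = y := by
  cases x; cases y; cases h; rfl

/-- Matrix multiplication of generalized rook matrices. -/
instance : Mul (Rook n G) where
  mul x y :=
  { col := fun j => (y.col j).bind fun p => (x.col p.2).map fun q => (q.1 * p.1, q.2)
    inj := by
      intro j k p q hp hq hpq
      simp only [Option.bind_eq_some_iff, Option.map_eq_some_iff] at hp hq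
      obtain ⟨pj, hyj, qj, hxj, rfl⟩ := hp
      obtain ⟨pk, hyk, qk, hxk, rfl⟩ := hq
      exact y.inj hyj hyk (x.inj hxj hxk hpq) }

theorem mul_col (x y : Rook n G) (j : Fin n) :
    (x * y).col j = (y.col j).bind fun p => (x.col p.2).map fun q => (q.1 * p.1, q.2) :=
  rfl

/-- The identity matrix. -/
instance : One (Rook n G) where
  one :=
  { col := fun j => some (1, j)
    inj := by
      intro j k p q hp hq hpq
      simp only [Option.some.injEq] at hp hq
      subst hp; subst hq; exact hpq }

theorem one_col (j : Fin n) : (1 : Rook n G).col j = some (1, j) := rfl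

/-- The zero matrix. -/
instance : Zero (Rook n G) where
  zero :=
  { col := fun _ => none
    inj := fun _ _ _ _ hp _ _ => nomatch hp }

instance : Monoid (Rook n G) where
  mul_assoc x y z := by
    refine ext' (funext fun j => ?_)
    simp only [mul_col]
    rcases hz : z.col j with _ | p
    · simp
    rcases hy : y.col p.2 with _ | p'
    · simp [hy]
    rcases hx : x.col p'.2 with _ | p''
    · simp [hy, hx]
    simp [hy, hx, mul_assoc]
  one_mul x := by
    refine ext' (funext fun j => ?_)
    simp only [mul_col]
    rcases hx : x.col j with _ | p <;> simp [one_col]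
  mul_one x := by
    refine ext' (funext fun j => ?_)
    simp only [mul_col, one_col]
    rcases hx : x.col j with _ | p <;> simp [hx]

open scoped Classical in
/-- The inverse of a generalized rook matrix (conjugate transpose pattern). -/
noncomputable instance : Inv (Rook n G) where
  inv x :=
  { col := fun i =>
      if h : ∃ jp : Fin n × (G × Fin n), x.col jp.1 = some jp.2 ∧ jp.2.2 = i
      then some ((h.choose.2.1)⁻¹, h.choose.1)
      else none
    inj := by
      intro i i' p q hp hq hpq
      split_ifs at hp hq with h h'
      obtain ⟨hcol, hrow⟩ := h.choose_spec
      obtain ⟨hcol', hrow'⟩ := h'.choose_spec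
      injection hp with hp'
      injection hq with hq'
      subst hp'; subst hq'
      have hj : h.choose.1 = h'.choose.1 := hpq
      rw [← hj, hcol] at hcol'
      have hpq2 : h.choose.2 = h'.choose.2 := Option.some.inj hcol'
      rw [← hrow, ← hrow', hpq2] }

end Rook

/-- The action of the symmetric group on `Fin n` on `Fin n → G` by permuting
coordinates, as a homomorphism into the automorphism group. -/
def permAction (G : Type*) [Group G] (n : ℕ) :
    Equiv.Perm (Fin n) →* MulAut (Fin n → G) where
  toFun σ :=
    { toFun := fun f => f ∘ σ.symm
      invFun := fun f => f ∘ σ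
      left_inv := fun f => by ext i; simp
      right_inv := fun f => by ext i; simp
      map_mul' := fun f g => rfl }
  map_one' := by
    ext f i
    simp [Equiv.Perm.one_def]
  map_mul' σ τ := by
    ext f i
    simp [Equiv.Perm.mul_def, Equiv.symm_trans_apply]

/-- The permutational wreath product `G ≀ Sym(Fin n)`: the semidirect product
of `Fin n → G` by `Equiv.Perm (Fin n)` acting by permuting coordinates. -/
abbrev Wreath (G : Type*) [Group G] (n : ℕ) :=
  SemidirectProduct (Fin n → G) (Equiv.Perm (Fin n)) (permAction G n)

/-!
An element of `G ≀ Sym(Fin n)` is a monomial `n × n` matrix over `G`, determined by its columns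
`b ↦ (entry, row)`, and multiplication in the wreath product is matrix multiplication of these
columns. Replacing each entry of a monomial (or rook) `m × m` matrix over `G ≀ Sym(Fin d)` by the
`d × d` monomial matrix it stands for, with `Fin m × Fin d ≃ Fin (m·d)`, is block matrix
multiplication and hence multiplicative; since `d = ⌊n/m⌋ > 0` every block can be read back off
its columns, so the map is injective. For rook matrices one finally pads with an identity block
from size `m·d ≤ n` up to `n`, and passes to unit groups.
-/

namespace Wreath

variable {G : Type*} [Group G] {m d n : ℕ}

/-- Column `b` of `w` viewed as a monomial matrix: its nonzero entry and the row it sits in. -/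
def col (w : Wreath G n) (b : Fin n) : G × Fin n :=
  (w.left (w.right b), w.right b)

theorem col_injective : Function.Injective (col : Wreath G n → Fin n → G × Fin n) := by
  intro v w h
  have hright : v.right = w.right := Equiv.ext fun b => congrArg Prod.snd (congrFun h b)
  refine SemidirectProduct.ext (funext fun c => ?_) hright
  have := congrArg Prod.fst (congrFun h (v.right.symm c))
  simpa [col, hright] using this

@[simp] theorem col_one (b : Fin n) : col (1 : Wreath G n) b = (1, b) := rfl

@[simp] theorem col_mul (v w : Wreath G n) (b : Fin n) :
    col (v * w) b = ((col v (col w b).2).1 * (col w b).1, (col v (col w b).2).2) := by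
  simp [col, SemidirectProduct.mul_left, permAction]

/-- Column `(i, b)` of the `m·d × m·d` block matrix whose column block `i` holds the monomial
matrix `p.1` in row block `p.2`. -/
def blockCol (p : Wreath G d × Fin m) (b : Fin d) : G × Fin (m * d) :=
  ((col p.1 b).1, finProdFinEquiv (p.2, (col p.1 b).2))

theorem blockCol_injective (hd : 0 < d) :
    Function.Injective (blockCol : Wreath G d × Fin m → Fin d → G × Fin (m * d)) := by
  intro p q h
  have hcol (b : Fin d) : col p.1 b = col q.1 b ∧ p.2 = q.2 := by
    have := congrFun h b
    simp only [blockCol, Prod.ext_iff, EmbeddingLike.apply_eq_iff_eq] at this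
    exact ⟨Prod.ext this.1 this.2.2, this.2.1⟩
  exact Prod.ext (col_injective (funext fun b => (hcol b).1)) (hcol ⟨0, hd⟩).2

def flatten (x : Wreath (Wreath G d) m) : Wreath G (m * d) :=
  ⟨fun k => (x.left (finProdFinEquiv.symm k).1).left (finProdFinEquiv.symm k).2,
    finProdFinEquiv.permCongr (x.right.prodShear fun i => (x.left (x.right i)).right)⟩

@[simp] theorem col_flatten (x : Wreath (Wreath G d) m) (i : Fin m) (b : Fin d) :
    col (flatten x) (finProdFinEquiv (i, b)) = blockCol (col x i) b := by
  simp [col, flatten, blockCol, -finProdFinEquiv_symm_apply]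

theorem flatten_mul (x y : Wreath (Wreath G d) m) : flatten (x * y) = flatten x * flatten y := by
  refine col_injective (funext fun k => ?_)
  obtain ⟨⟨i, b⟩, rfl⟩ := finProdFinEquiv.surjective k
  simp [blockCol]

def flattenHom : Wreath (Wreath G d) m →* Wreath G (m * d) :=
  MonoidHom.mk' flatten flatten_mul

theorem flattenHom_injective (hd : 0 < d) :
    Function.Injective (flattenHom : Wreath (Wreath G d) m →* Wreath G (m * d)) := by
  intro x y h
  refine col_injective (funext fun i => blockCol_injective hd (funext fun b => ?_))
  rw [← col_flatten, ← col_flatten]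
  exact congrArg (col · _) h

end Wreath

namespace Rook

variable {G : Type*} [Group G] {m d k n : ℕ}

def flatten (x : Rook m (Wreath G d)) : Rook (m * d) G where
  col k := (x.col (finProdFinEquiv.symm k).1).map (Wreath.blockCol · (finProdFinEquiv.symm k).2)
  inj := by
    intro k k' P Q hP hQ hPQ
    obtain ⟨⟨i, b⟩, rfl⟩ := finProdFinEquiv.surjective k
    obtain ⟨⟨i', b'⟩, rfl⟩ := finProdFinEquiv.surjective k'
    simp only [Equiv.symm_apply_apply, Option.map_eq_some_iff] at hP hQ
    obtain ⟨p, hp, rfl⟩ := hP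
    obtain ⟨q, hq, rfl⟩ := hQ
    simp only [Wreath.blockCol, EmbeddingLike.apply_eq_iff_eq, Prod.ext_iff] at hPQ
    obtain rfl : i = i' := x.inj hp hq hPQ.1
    obtain rfl : p = q := Option.some.inj (hp.symm.trans hq)
    obtain rfl : b = b' := p.1.right.injective hPQ.2
    rfl

@[simp] theorem col_flatten (x : Rook m (Wreath G d)) (i : Fin m) (b : Fin d) :
    (flatten x).col (finProdFinEquiv (i, b)) = (x.col i).map (Wreath.blockCol · b) := by
  simp [flatten, -finProdFinEquiv_symm_apply]

def flattenHom : Rook m (Wreath G d) →* Rook (m * d) G where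
  toFun := flatten
  map_one' := by
    refine Rook.ext' (funext fun k => ?_)
    obtain ⟨⟨i, b⟩, rfl⟩ := finProdFinEquiv.surjective k
    simp [one_col, Wreath.blockCol]
  map_mul' x y := by
    refine Rook.ext' (funext fun k => ?_)
    obtain ⟨⟨i, b⟩, rfl⟩ := finProdFinEquiv.surjective k
    rcases hy : y.col i with _ | ⟨w, r⟩
    · simp [mul_col, hy]
    rcases hx : x.col r with _ | ⟨v, s⟩ <;> simp [mul_col, hy, hx, Wreath.blockCol]

theorem flattenHom_injective (hd : 0 < d) :
    Function.Injective (flattenHom : Rook m (Wreath G d) →* Rook (m * d) G) := by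
  intro x y h
  refine Rook.ext' (funext fun i => ?_)
  have hcol (b : Fin d) :
      (x.col i).map (Wreath.blockCol · b) = (y.col i).map (Wreath.blockCol · b) := by
    rw [← col_flatten, ← col_flatten]
    exact congrFun (congrArg col h) _
  rcases hx : x.col i with _ | p <;> rcases hy : y.col i with _ | q
  · rfl
  · simpa [hx, hy] using hcol ⟨0, hd⟩
  · simpa [hx, hy] using hcol ⟨0, hd⟩
  · have hb (b : Fin d) : Wreath.blockCol p b = Wreath.blockCol q b := by
      simpa [hx, hy] using hcol b
    rw [Wreath.blockCol_injective hd (funext hb)]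

/-- `x` padded with an identity block to size `n`. -/
def castLE (h : k ≤ n) (x : Rook k G) : Rook n G where
  col j :=
    if hj : (j : ℕ) < k then (x.col ⟨j, hj⟩).map (Prod.map id (Fin.castLE h)) else some (1, j)
  inj := by
    intro j j' p q hp hq hpq
    by_cases hj : (j : ℕ) < k <;> by_cases hj' : (j' : ℕ) < k <;>
      simp only [hj, hj', dite_true, dite_false, Option.map_eq_some_iff, Option.some.injEq] at hp hq
    · obtain ⟨p, hp, rfl⟩ := hp
      obtain ⟨q, hq, rfl⟩ := hq
      exact Fin.ext (Fin.mk.inj_iff.mp (x.inj hp hq (Fin.castLE_injective h hpq)))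
    · obtain ⟨p, -, rfl⟩ := hp
      subst hq
      have : ((Fin.castLE h p.2 : Fin n) : ℕ) = j' := congrArg Fin.val hpq
      exact absurd (this ▸ p.2.isLt) hj'
    · obtain ⟨q, -, rfl⟩ := hq
      subst hp
      have : (j : ℕ) = (Fin.castLE h q.2 : Fin n) := congrArg Fin.val hpq
      exact absurd (this ▸ q.2.isLt) hj
    · subst hp hq
      exact hpq

theorem col_castLE_castLE (h : k ≤ n) (x : Rook k G) (i : Fin k) :
    (castLE h x).col (Fin.castLE h i) = (x.col i).map (Prod.map id (Fin.castLE h)) := by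
  simp [castLE]

theorem col_castLE_of_le (h : k ≤ n) (x : Rook k G) {j : Fin n} (hj : k ≤ j) :
    (castLE h x).col j = some (1, j) := by
  simp [castLE, hj]

def castLEHom (h : k ≤ n) : Rook k G →* Rook n G where
  toFun := castLE h
  map_one' := by
    refine Rook.ext' (funext fun j => ?_)
    by_cases hj : (j : ℕ) < k
    · obtain ⟨i, rfl⟩ : ∃ i : Fin k, Fin.castLE h i = j := ⟨⟨j, hj⟩, rfl⟩
      simp [col_castLE_castLE, one_col]
    · simp [col_castLE_of_le h _ (not_lt.mp hj), one_col]
  map_mul' x y := by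
    refine Rook.ext' (funext fun j => ?_)
    by_cases hj : (j : ℕ) < k
    · obtain ⟨i, rfl⟩ : ∃ i : Fin k, Fin.castLE h i = j := ⟨⟨j, hj⟩, rfl⟩
      simp [col_castLE_castLE, mul_col, Option.map_bind, Option.bind_map, Function.comp_def]
    · simp [col_castLE_of_le h _ (not_lt.mp hj), mul_col]

theorem castLEHom_injective (h : k ≤ n) :
    Function.Injective (castLEHom h : Rook k G →* Rook n G) := by
  intro x y hxy
  refine Rook.ext' (funext fun i => Option.map_injective (Function.injective_id.prodMap
    (Fin.castLE_injective h)) ?_)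
  rw [← col_castLE_castLE, ← col_castLE_castLE]
  exact congrFun (congrArg col hxy) _

end Rook

/-- For `0 < m ≤ n` and `d = ⌊n/m⌋`, the wreath product
`(G ≀ Sym(Fin d)) ≀ Sym(Fin m)` embeds into `G ≀ Sym(Fin (m·d))`, and hence
the unit group of `Mat_m((G ≀ Sym(Fin d))⁰)` embeds into the unit group of
`Matₙ(G⁰)`. -/
theorem stmt16 (m n : ℕ) (hm : 0 < m) (hmn : m ≤ n) (G : Type*) [Group G] :
    (∃ f : Wreath (Wreath G (n / m)) m →* Wreath G (m * (n / m)),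
        Function.Injective f) ∧
    (∃ g : (Rook m (Wreath G (n / m)))ˣ →* (Rook n G)ˣ,
        Function.Injective g) := by
  have hd : 0 < n / m := Nat.div_pos hmn hm
  have hle : m * (n / m) ≤ n := Nat.mul_div_le n m
  exact ⟨⟨Wreath.flattenHom, Wreath.flattenHom_injective hd⟩,
    ⟨Units.map ((Rook.castLEHom hle).comp Rook.flattenHom),
      Units.map_injective ((Rook.castLEHom_injective hle).comp (Rook.flattenHom_injective hd))⟩⟩
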